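/- Let l be an n-dimensional real Lie algebra with n ≥ 2 and ∇ a torsion-free bilinear product on l whose Weyl projective curvature W vanishes identically. Let s ⊆ l be an autoparallel Lie subalgebra of dimension m ≥ 2. Then for all X, Y ∈ s: Ric^s(X,Y) = (1/(n²−1))·((mn−1)·Ric(X,Y) + (m−n)·Ric(Y,X)) and P^s(X,Y) = P(X,Y), where Ric^s and P^s are the intrinsic Ricci tensor and P-tensor of the restricted product ∇|_s on s. -/

import Mathlib

noncomputable section

/-- The curvature `R(X,Y)Z` of a bilinear product `∇` on a Lie algebra. -/
def curv {l : Type*} [LieRing l] [LieAlgebra ℝ l]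
    (nab : l →ₗ[ℝ] l →ₗ[ℝ] l) (X Y Z : l) : l :=
  nab X (nab Y Z) - nab Y (nab X Z) - nab ⁅X, Y⁆ Z

/-- The endomorphism `Z ↦ R(Z,X)Y`. -/
def ricMap {l : Type*} [LieRing l] [LieAlgebra ℝ l]
    (nab : l →ₗ[ℝ] l →ₗ[ℝ] l) (X Y : l) : l →ₗ[ℝ] l :=
  nab.flip (nab X Y) - (nab X) ∘ₗ (nab.flip Y)
    + (nab.flip Y) ∘ₗ (LieAlgebra.ad ℝ l X)

/-- The Ricci tensor `Ric(X,Y) = tr(Z ↦ R(Z,X)Y)`. -/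
def ric {l : Type*} [LieRing l] [LieAlgebra ℝ l]
    (nab : l →ₗ[ℝ] l →ₗ[ℝ] l) (X Y : l) : ℝ :=
  LinearMap.trace ℝ l (ricMap nab X Y)

/-- The tensor `P(X,Y) = (1/(k²−1))·(k·Ric(X,Y) + Ric(Y,X))` with `k = dim l`. -/
def pT {l : Type*} [LieRing l] [LieAlgebra ℝ l]
    (nab : l →ₗ[ℝ] l →ₗ[ℝ] l) (X Y : l) : ℝ :=
  (1 / ((Module.finrank ℝ l : ℝ) ^ 2 - 1))
    * ((Module.finrank ℝ l : ℝ) * ric nab X Y + ric nab Y X)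

/-- The Weyl projective curvature
`W(X,Y)Z = R(X,Y)Z + (P(X,Y) − P(Y,X))·Z − P(Y,Z)·X + P(X,Z)·Y`. -/
def weyl {l : Type*} [LieRing l] [LieAlgebra ℝ l]
    (nab : l →ₗ[ℝ] l →ₗ[ℝ] l) (X Y Z : l) : l :=
  curv nab X Y Z + (pT nab X Y - pT nab Y X) • Z - pT nab Y Z • X + pT nab X Z • Y

/-! `W = 0` expresses the curvature through `P`:
`R(X,Y)Z = P(Y,Z)·X − P(X,Z)·Y − (P(X,Y) − P(Y,X))·Z`. On an autoparallel subalgebra `s` the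
intrinsic curvature is the restriction of `R`, so the trace over `s` of `Z ↦ R(Z,X)Y` is
`Ric^s(X,Y) = m·P(X,Y) − P(Y,X)`. Both claims follow from this identity: the first by expanding
`P`, the second because `Ric ↦ P` inverts `P ↦ m·P − Pᵀ` in dimension `m` when `m² ≠ 1`. -/

section

variable {l : Type*} [LieRing l] [LieAlgebra ℝ l]

theorem curv_eq_of_weyl_eq_zero {nab : l →ₗ[ℝ] l →ₗ[ℝ] l} {X Y Z : l}
    (h : weyl nab X Y Z = 0) :
    curv nab X Y Z = pT nab Y Z • X - pT nab X Z • Y - (pT nab X Y - pT nab Y X) • Z := by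
  rw [weyl] at h
  linear_combination (norm := module) h

theorem ricMap_apply (nab : l →ₗ[ℝ] l →ₗ[ℝ] l) (X Y Z : l) :
    ricMap nab X Y Z = curv nab Z X Y := by
  simp only [ricMap, curv, LieAlgebra.ad_apply, LinearMap.add_apply, LinearMap.sub_apply,
    LinearMap.comp_apply, LinearMap.flip_apply, ← lie_skew Z X, map_neg, LinearMap.neg_apply]
  abel

def ricForm (nab : l →ₗ[ℝ] l →ₗ[ℝ] l) : l →ₗ[ℝ] l →ₗ[ℝ] ℝ :=
  LinearMap.mk₂ ℝ (ric nab)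
    (fun X₁ X₂ Y => by
      simp only [ric, ← map_add]; congr 1; ext Z
      simp only [LinearMap.add_apply, ricMap_apply, curv, map_add, lie_add]; abel)
    (fun c X Y => by
      simp only [ric, ← map_smul]; congr 1; ext Z
      simp only [LinearMap.smul_apply, ricMap_apply, curv, map_smul, lie_smul, smul_sub])
    (fun X Y₁ Y₂ => by
      simp only [ric, ← map_add]; congr 1; ext Z
      simp only [LinearMap.add_apply, ricMap_apply, curv, map_add]; abel)
    (fun c X Y => by
      simp only [ric, ← map_smul]; congr 1; ext Z
      simp only [LinearMap.smul_apply, ricMap_apply, curv, map_smul, smul_sub])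

def pForm (nab : l →ₗ[ℝ] l →ₗ[ℝ] l) : l →ₗ[ℝ] l →ₗ[ℝ] ℝ :=
  (1 / ((Module.finrank ℝ l : ℝ) ^ 2 - 1))
    • ((Module.finrank ℝ l : ℝ) • ricForm nab + (ricForm nab).flip)

@[simp]
theorem pForm_apply (nab : l →ₗ[ℝ] l →ₗ[ℝ] l) (X Y : l) : pForm nab X Y = pT nab X Y := by
  simp [pForm, pT, ricForm, mul_add]

theorem ric_eq_of_curv_eq [FiniteDimensional ℝ l] {nab : l →ₗ[ℝ] l →ₗ[ℝ] l}
    (p : l →ₗ[ℝ] l →ₗ[ℝ] ℝ)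
    (h : ∀ X Y Z, curv nab X Y Z = p Y Z • X - p X Z • Y - (p X Y - p Y X) • Z) (X Y : l) :
    ric nab X Y = Module.finrank ℝ l * p X Y - p Y X := by
  have hmap : ricMap nab X Y
      = p X Y • LinearMap.id - (p.flip Y).smulRight X - (p.flip X - p X).smulRight Y := by
    ext Z
    rw [ricMap_apply, h]
    simp only [LinearMap.sub_apply, LinearMap.smul_apply, LinearMap.id_apply,
      LinearMap.smulRight_apply, LinearMap.flip_apply]
  rw [ric, hmap]
  simp only [map_sub, map_smul, LinearMap.trace_id, LinearMap.trace_smulRight,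
    LinearMap.sub_apply, LinearMap.flip_apply, smul_eq_mul]
  ring

theorem coe_curv_of_restrict {nab : l →ₗ[ℝ] l →ₗ[ℝ] l} {s : LieSubalgebra ℝ l}
    {nabS : s →ₗ[ℝ] s →ₗ[ℝ] s} (hnabS : ∀ X Y : s, (nabS X Y : l) = nab X Y) (X Y Z : s) :
    ((curv nabS X Y Z : s) : l) = curv nab X Y Z := by
  simp only [curv, AddSubgroupClass.coe_sub, hnabS, LieSubalgebra.coe_bracket]

theorem ric_restrict_of_weyl_eq_zero {nab : l →ₗ[ℝ] l →ₗ[ℝ] l}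
    (hW : ∀ X Y Z : l, weyl nab X Y Z = 0) {s : LieSubalgebra ℝ l} [FiniteDimensional ℝ s]
    {nabS : s →ₗ[ℝ] s →ₗ[ℝ] s} (hnabS : ∀ X Y : s, (nabS X Y : l) = nab X Y) (X Y : s) :
    ric nabS X Y = Module.finrank ℝ s * pT nab X Y - pT nab Y X := by
  refine ric_eq_of_curv_eq (nab := nabS)
    ((pForm nab).compl₁₂ s.toSubmodule.subtype s.toSubmodule.subtype)
    (fun X Y Z => Subtype.ext ?_) X Y
  rw [coe_curv_of_restrict hnabS, curv_eq_of_weyl_eq_zero (hW _ _ _)]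
  rfl

theorem pT_eq_of_ric_eq {nab : l →ₗ[ℝ] l →ₗ[ℝ] l} {p : l → l → ℝ}
    (hm : (Module.finrank ℝ l : ℝ) ^ 2 ≠ 1)
    (h : ∀ X Y, ric nab X Y = Module.finrank ℝ l * p X Y - p Y X) (X Y : l) :
    pT nab X Y = p X Y := by
  rw [pT, h, h, div_mul_eq_mul_div, one_mul, div_eq_iff (sub_ne_zero.2 hm)]
  ring

end

theorem ricci_of_autoparallel_subalgebra_general
    (l : Type*) [LieRing l] [LieAlgebra ℝ l]
    (nab : l →ₗ[ℝ] l →ₗ[ℝ] l)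
    (hW : ∀ X Y Z : l, weyl nab X Y Z = 0)
    (s : LieSubalgebra ℝ l) (hm : 2 ≤ Module.finrank ℝ s)
    (nabS : s →ₗ[ℝ] s →ₗ[ℝ] s)
    (hnabS : ∀ X Y : s, (nabS X Y : l) = nab X Y) :
    ∀ X Y : s,
      ric nabS X Y
        = (1 / ((Module.finrank ℝ l : ℝ) ^ 2 - 1))
          * (((Module.finrank ℝ s : ℝ) * (Module.finrank ℝ l : ℝ) - 1)
              * ric nab (X : l) (Y : l)
            + ((Module.finrank ℝ s : ℝ) - (Module.finrank ℝ l : ℝ))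
              * ric nab (Y : l) (X : l)) ∧
      pT nabS X Y = pT nab (X : l) (Y : l) := by
  have : FiniteDimensional ℝ s := Module.finite_of_finrank_pos (by omega)
  have hric := ric_restrict_of_weyl_eq_zero hW hnabS
  have hm2 : (Module.finrank ℝ s : ℝ) ^ 2 ≠ 1 := by
    have : (2 : ℝ) ≤ Module.finrank ℝ s := by exact_mod_cast hm
    nlinarith
  intro X Y
  refine ⟨?_, pT_eq_of_ric_eq hm2 hric X Y⟩
  rw [hric]
  simp only [pT]
  ring

/-- If `∇` is a torsion-free, projectively flat (vanishing Weyl curvature)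
bilinear product on `l` (`dim l = n ≥ 2`) and `s` is an autoparallel Lie subalgebra of
dimension `m ≥ 2`, then the intrinsic Ricci tensor of the induced product satisfies
`Ric^s(X,Y) = (1/(n²−1))·((mn−1)·Ric(X,Y) + (m−n)·Ric(Y,X))` and `P^s(X,Y) = P(X,Y)`. -/
theorem ricci_of_autoparallel_subalgebra
    (l : Type*) [LieRing l] [LieAlgebra ℝ l]
    [FiniteDimensional ℝ l] (hn : 2 ≤ Module.finrank ℝ l)
    (nab : l →ₗ[ℝ] l →ₗ[ℝ] l)
    (tf : ∀ X Y : l, nab X Y - nab Y X = ⁅X, Y⁆)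
    (hW : ∀ X Y Z : l, weyl nab X Y Z = 0)
    (s : LieSubalgebra ℝ l) (hm : 2 ≤ Module.finrank ℝ s)
    (auto : ∀ X Y : l, X ∈ s → Y ∈ s → nab X Y ∈ s)
    (nabS : s →ₗ[ℝ] s →ₗ[ℝ] s)
    (hnabS : ∀ X Y : s, (nabS X Y : l) = nab X Y) :
    ∀ X Y : s,
      ric nabS X Y
        = (1 / ((Module.finrank ℝ l : ℝ) ^ 2 - 1))
          * (((Module.finrank ℝ s : ℝ) * (Module.finrank ℝ l : ℝ) - 1)
              * ric nab (X : l) (Y : l)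
            + ((Module.finrank ℝ s : ℝ) - (Module.finrank ℝ l : ℝ))
              * ric nab (Y : l) (X : l)) ∧
      pT nabS X Y = pT nab (X : l) (Y : l) :=
  ricci_of_autoparallel_subalgebra_general l nab hW s hm nabS hnabS

end
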